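/- arXiv:1301.6063 — 8 statements merged into one kernel-verified Lean document; each statement's English description precedes it below -/
import Mathlib

section
/- Let U, V, Γ be finite nonempty sets, q ∈ 𝔓(U×V), f : U → Γ, g : V → Γ, and let ε, σ be real numbers with 0 < σ < 1/2 and 0 < ε ≤ (1−2σ)/2. Suppose that q({(u,v) : f(u) = g(v)}) ≥ 1−ε and that for every k ∈ Γ both q_U({u : f(u) = k}) ≤ ε and q_V({v : g(v) = k}) ≤ ε. Then there exists a function Θ : Γ → {0,1} such that q({(u,v) : Θ(f(u)) ≠ Θ(g(v))}) ≤ ε, q_U({u : Θ(f(u)) = 1}) ∈ [σ, 1−σ], and q_V({v : Θ(g(v)) = 1}) ∈ [σ, 1−σ]. -/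
attribute [local instance] Classical.propDecidable

/-!
Average the two marginal distributions of `f` and `g` on `Γ`: every atom of the average has
mass at most `ε`, so a heaviest set `s ⊆ Γ` of average mass at most `1/2 + ε/2` has average
mass at least `1/2 - ε/2` (else one more atom could be added). Let `Θ` be the indicator of `s`.
Then `Θ∘f` and `Θ∘g` can only disagree where `f` and `g` do, so with probability at most `ε`,
and this also bounds the difference of the two masses `q_U(Θ∘f = 1)` and `q_V(Θ∘g = 1)`. As
their mean lies in `[1/2 - ε/2, 1/2 + ε/2]`, each lies in `[1/2 - ε, 1/2 + ε] ⊆ [σ, 1 - σ]`.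
-/

open Finset

theorem exists_finset_sum_mem_Icc {ι : Type*} [Fintype ι] {r : ι → ℝ} {ε t : ℝ}
    (hr0 : ∀ k, 0 ≤ r k) (hrε : ∀ k, r k ≤ ε) (hε : 0 ≤ ε) (ht0 : 0 ≤ t)
    (ht : t ≤ ∑ k, r k) :
    ∃ s : Finset ι, ∑ k ∈ s, r k ∈ Set.Icc (t - ε) t := by
  obtain ⟨s, hs, hmax⟩ := (univ.filter fun s : Finset ι => ∑ k ∈ s, r k ≤ t).exists_max_image
    (fun s => ∑ k ∈ s, r k) ⟨∅, by simpa using ht0⟩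
  rw [mem_filter] at hs
  refine ⟨s, ?_, hs.2⟩
  by_contra! hlow
  obtain ⟨k, hks, hk⟩ : ∃ k ∉ s, 0 < r k := by
    by_contra! h
    have : ∑ k ∈ sᶜ, r k = 0 :=
      sum_eq_zero fun k hk => le_antisymm (h k (mem_compl.1 hk)) (hr0 k)
    linarith [sum_add_sum_compl s r]
  have hins := hmax (insert k s) (by
    rw [mem_filter, sum_insert hks]
    exact ⟨mem_univ _, by linarith [hrε k]⟩)
  rw [sum_insert hks] at hins
  linarith

section WeightedSums

variable {α Γ : Type*} [Fintype α] {q : α → ℝ}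

theorem sum_ite_le_sum_ite_of_imp (hq0 : ∀ a, 0 ≤ q a) {p p' : α → Prop}
    [DecidablePred p] [DecidablePred p'] (h : ∀ a, p a → p' a) :
    ∑ a, (if p a then q a else 0) ≤ ∑ a, if p' a then q a else 0 :=
  sum_le_sum fun a _ => by
    split_ifs with hp hp'
    exacts [le_rfl, absurd (h a hp) hp', hq0 a, le_rfl]

theorem sum_ite_add_sum_ite_not (p : α → Prop) [DecidablePred p] :
    ∑ a, (if p a then q a else 0) + ∑ a, (if ¬p a then q a else 0) = ∑ a, q a := by
  rw [← sum_add_distrib]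
  exact sum_congr rfl fun a _ => by split_ifs <;> simp

theorem sum_sum_ite_eq_sum_ite_mem (F : α → Γ) (s : Finset Γ) :
    ∑ k ∈ s, ∑ a, (if F a = k then q a else 0) = ∑ a, if F a ∈ s then q a else 0 := by
  rw [sum_comm]
  exact sum_congr rfl fun a _ => sum_ite_eq s (F a) fun _ => q a

theorem abs_sum_ite_eq_one_sub_le (hq0 : ∀ a, 0 ≤ q a) (X Y : α → Fin 2) :
    |∑ a, (if X a = 1 then q a else 0) - ∑ a, if Y a = 1 then q a else 0|
      ≤ ∑ a, if X a ≠ Y a then q a else 0 := by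
  rw [← sum_sub_distrib]
  refine (abs_sum_le_sum_abs _ _).trans (sum_le_sum fun a _ => ?_)
  have hqa := hq0 a
  generalize X a = x, Y a = y
  fin_cases x <;> fin_cases y <;> simp [abs_of_nonneg hqa]

variable [Fintype Γ]

theorem exists_balanced_binarization (hq0 : ∀ a, 0 ≤ q a) (hq1 : ∑ a, q a = 1)
    (F G : α → Γ) {ε : ℝ} (hε0 : 0 ≤ ε) (hε1 : ε ≤ 1)
    (hagree : 1 - ε ≤ ∑ a, if F a = G a then q a else 0)
    (hF : ∀ k, ∑ a, (if F a = k then q a else 0) ≤ ε)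
    (hG : ∀ k, ∑ a, (if G a = k then q a else 0) ≤ ε) :
    ∃ Θ : Γ → Fin 2, (∑ a, if Θ (F a) ≠ Θ (G a) then q a else 0) ≤ ε ∧
      ∑ a, (if Θ (F a) = 1 then q a else 0) ∈ Set.Icc (1 / 2 - ε) (1 / 2 + ε) ∧
      ∑ a, (if Θ (G a) = 1 then q a else 0) ∈ Set.Icc (1 / 2 - ε) (1 / 2 + ε) := by
  have hfiber_nonneg (H : α → Γ) (k : Γ) : 0 ≤ ∑ a, if H a = k then q a else 0 :=
    sum_nonneg fun a _ => by split_ifs <;> simp [hq0 a]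
  have hfiber_total (H : α → Γ) : ∑ k, ∑ a, (if H a = k then q a else 0) = 1 := by
    simp [sum_sum_ite_eq_sum_ite_mem, hq1]
  obtain ⟨s, hs⟩ := exists_finset_sum_mem_Icc (t := 1 + ε) (ε := 2 * ε)
    (r := fun k => ∑ a, (if F a = k then q a else 0) + ∑ a, if G a = k then q a else 0)
    (fun k => add_nonneg (hfiber_nonneg F k) (hfiber_nonneg G k))
    (fun k => by linarith [hF k, hG k]) (by linarith) (by linarith)
    (by rw [sum_add_distrib, hfiber_total, hfiber_total]; linarith)
  set Θ : Γ → Fin 2 := fun k => if k ∈ s then 1 else 0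
  have hmass (H : α → Γ) :
      ∑ a, (if Θ (H a) = 1 then q a else 0) = ∑ k ∈ s, ∑ a, if H a = k then q a else 0 := by
    rw [sum_sum_ite_eq_sum_ite_mem]
    exact sum_congr rfl fun a _ => by by_cases h : H a ∈ s <;> simp [Θ, h]
  have hdisagree : (∑ a, if Θ (F a) ≠ Θ (G a) then q a else 0) ≤ ε := by
    have hsplit := sum_ite_add_sum_ite_not (q := q) fun a => F a = G a
    have hmono := sum_ite_le_sum_ite_of_imp hq0 (p := fun a => Θ (F a) ≠ Θ (G a))
      (p' := fun a => ¬F a = G a) fun a h heq => h (congrArg Θ heq)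
    linarith
  have hdiff := abs_le.mp ((abs_sum_ite_eq_one_sub_le hq0 (Θ ∘ F) (Θ ∘ G)).trans hdisagree)
  refine ⟨Θ, hdisagree, ?_⟩
  simp only [Function.comp_apply, hmass, sum_add_distrib, Set.mem_Icc] at hs hdiff ⊢
  exact ⟨⟨by linarith, by linarith⟩, ⟨by linarith, by linarith⟩⟩

end WeightedSums

theorem sum_ite_sum_eq_sum_ite_fst {U V : Type*} [Fintype U] [Fintype V] (q : U × V → ℝ)
    (p : U → Prop) [DecidablePred p] :
    ∑ u, (if p u then ∑ v, q (u, v) else 0) = ∑ uv : U × V, if p uv.1 then q uv else 0 := by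
  rw [Fintype.sum_prod_type]
  exact sum_congr rfl fun u _ => by split_ifs <;> simp

theorem sum_ite_sum_eq_sum_ite_snd {U V : Type*} [Fintype U] [Fintype V] (q : U × V → ℝ)
    (p : V → Prop) [DecidablePred p] :
    ∑ v, (if p v then ∑ u, q (u, v) else 0) = ∑ uv : U × V, if p uv.2 then q uv else 0 := by
  rw [Fintype.sum_prod_type_right]
  exact sum_congr rfl fun v _ => by split_ifs <;> simp

theorem binarization_of_almost_common_functions_general
    {U V Γ : Type} [Fintype U] [Fintype V] [Fintype Γ]
    (q : U × V → ℝ) (hq0 : ∀ uv : U × V, 0 ≤ q uv) (hq1 : ∑ uv : U × V, q uv = 1)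
    (f : U → Γ) (g : V → Γ) (ε σ : ℝ)
    (hσ0 : 0 < σ) (hε0 : 0 < ε) (hε : ε ≤ (1 - 2 * σ) / 2)
    (hagree : 1 - ε ≤ ∑ uv : U × V, if f uv.1 = g uv.2 then q uv else 0)
    (hfk : ∀ k : Γ, (∑ u : U, if f u = k then ∑ v : V, q (u, v) else 0) ≤ ε)
    (hgk : ∀ k : Γ, (∑ v : V, if g v = k then ∑ u : U, q (u, v) else 0) ≤ ε) :
    ∃ Θ : Γ → Fin 2,
      (∑ uv : U × V, if Θ (f uv.1) ≠ Θ (g uv.2) then q uv else 0) ≤ ε ∧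
      (∑ u : U, if Θ (f u) = 1 then ∑ v : V, q (u, v) else 0) ∈ Set.Icc σ (1 - σ) ∧
      (∑ v : V, if Θ (g v) = 1 then ∑ u : U, q (u, v) else 0) ∈ Set.Icc σ (1 - σ) := by
  simp only [sum_ite_sum_eq_sum_ite_fst, sum_ite_sum_eq_sum_ite_snd] at hfk hgk ⊢
  obtain ⟨Θ, hdisagree, hmass_f, hmass_g⟩ :=
    exists_balanced_binarization hq0 hq1 (f ∘ Prod.fst) (g ∘ Prod.snd) hε0.le (by linarith)
      hagree hfk hgk
  have hIcc : Set.Icc (1 / 2 - ε) (1 / 2 + ε) ⊆ Set.Icc σ (1 - σ) :=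
    Set.Icc_subset_Icc (by linarith) (by linarith)
  exact ⟨Θ, hdisagree, hIcc hmass_f, hIcc hmass_g⟩

/-- If `q ∈ 𝔓(U×V)`, `f : U → Γ`, `g : V → Γ`, `0 < σ < 1/2`,
`0 < ε ≤ (1−2σ)/2`, the probability that `f` and `g` agree is at least `1−ε`, and
every single value `k ∈ Γ` has marginal probability at most `ε` under both `f` and `g`,
then there is a binarization `Θ : Γ → {0,1}` such that `Θ∘f` and `Θ∘g` disagree with
probability at most `ε` while both `q_U(Θ∘f = 1)` and `q_V(Θ∘g = 1)` lie in `[σ, 1−σ]`. -/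
theorem binarization_of_almost_common_functions
    {U V Γ : Type} [Fintype U] [Fintype V] [Fintype Γ]
    [Nonempty U] [Nonempty V] [Nonempty Γ]
    (q : U × V → ℝ) (hq0 : ∀ uv : U × V, 0 ≤ q uv) (hq1 : ∑ uv : U × V, q uv = 1)
    (f : U → Γ) (g : V → Γ) (ε σ : ℝ)
    (hσ0 : 0 < σ) (hσ : σ < 1 / 2) (hε0 : 0 < ε) (hε : ε ≤ (1 - 2 * σ) / 2)
    (hagree : 1 - ε ≤ ∑ uv : U × V, if f uv.1 = g uv.2 then q uv else 0)
    (hfk : ∀ k : Γ, (∑ u : U, if f u = k then ∑ v : V, q (u, v) else 0) ≤ ε)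
    (hgk : ∀ k : Γ, (∑ v : V, if g v = k then ∑ u : U, q (u, v) else 0) ≤ ε) :
    ∃ Θ : Γ → Fin 2,
      (∑ uv : U × V, if Θ (f uv.1) ≠ Θ (g uv.2) then q uv else 0) ≤ ε ∧
      (∑ u : U, if Θ (f u) = 1 then ∑ v : V, q (u, v) else 0) ∈ Set.Icc σ (1 - σ) ∧
      (∑ v : V, if Θ (g v) = 1 then ∑ u : U, q (u, v) else 0) ∈ Set.Icc σ (1 - σ) :=
  binarization_of_almost_common_functions_general q hq0 hq1 f g ε σ hσ0 hε0 hε hagree hfk hgk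
end

section
/- Let n ≥ 1 and let a, b, c : {1,…,n} → ℝ be nonnegative functions satisfying Σ_{k=1}^n a(k) = Σ_{k=1}^n b(k) = 1, c(k) ≤ min{a(k), b(k)} for all k, Σ_{k=1}^n c(k) ≥ 1−ε, and a(k) ≤ ε, b(k) ≤ ε for all k, where ε ≥ 0. Let 0 < σ < 1/2. Then there exists m ∈ {1,…,n} such that, with A_m := Σ_{k=1}^m a(k) and B_m := Σ_{k=1}^m b(k), one has σ ≤ min{A_m, B_m} and max{A_m, B_m} ≤ σ + 2ε. -/
/-!
Take the first index `m` at which both partial sums `A_m` and `B_m` have reached `σ`; it exists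
because `A_n = B_n = 1 > σ`. Just before `m` one of the two sums was still below `σ`, and a single
term is at most `ε`, so one of `A_m`, `B_m` is at most `σ + ε`. Finally `A_m` and `B_m` differ by
at most `ε`: their difference is bounded by the total mass `Σ (a - c)` (or `Σ (b - c)`) that `c`
misses, which is at most `ε`.
-/

open Finset

theorem Nat.exists_lt_not_and_succ_of_not_zero {p : ℕ → Prop} (h₀ : ¬p 0) :
    ∀ {n : ℕ}, p n → ∃ m < n, ¬p m ∧ p (m + 1)
  | 0, hn => absurd hn h₀
  | n + 1, hn => by
    by_cases hpn : p n
    · obtain ⟨m, hmn, hm⟩ := exists_lt_not_and_succ_of_not_zero h₀ hpn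
      exact ⟨m, hmn.trans n.lt_succ_self, hm⟩
    · exact ⟨n, n.lt_succ_self, hpn, hn⟩

theorem Finset.sum_sub_sum_le_sum_sub_sum_of_subset {ι α : Type*} [AddCommGroup α] [PartialOrder α]
    [IsOrderedAddMonoid α] {s t : Finset ι} {a b c : ι → α} (hst : s ⊆ t)
    (hca : ∀ k ∈ t, c k ≤ a k) (hcb : ∀ k ∈ s, c k ≤ b k) :
    ∑ k ∈ s, a k - ∑ k ∈ s, b k ≤ ∑ k ∈ t, a k - ∑ k ∈ t, c k :=
  calc ∑ k ∈ s, a k - ∑ k ∈ s, b k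
      ≤ ∑ k ∈ s, a k - ∑ k ∈ s, c k := sub_le_sub_left (sum_le_sum hcb) _
    _ = ∑ k ∈ s, (a k - c k) := (sum_sub_distrib ..).symm
    _ ≤ ∑ k ∈ t, (a k - c k) :=
        sum_le_sum_of_subset_of_nonneg hst fun k hk _ ↦ sub_nonneg.2 (hca k hk)
    _ = ∑ k ∈ t, a k - ∑ k ∈ t, c k := sum_sub_distrib ..

theorem partial_sums_balanced_cut_general
    (n : ℕ) (a b c : ℕ → ℝ) (ε σ : ℝ)
    (ha1 : ∑ k ∈ Finset.Icc 1 n, a k = 1)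
    (hb1 : ∑ k ∈ Finset.Icc 1 n, b k = 1)
    (hcab : ∀ k ∈ Finset.Icc 1 n, c k ≤ min (a k) (b k))
    (hcsum : 1 - ε ≤ ∑ k ∈ Finset.Icc 1 n, c k)
    (haε : ∀ k ∈ Finset.Icc 1 n, a k ≤ ε)
    (hbε : ∀ k ∈ Finset.Icc 1 n, b k ≤ ε)
    (hσ0 : 0 < σ) (hσ : σ < 1 / 2) :
    ∃ m ∈ Finset.Icc 1 n,
      σ ≤ min (∑ k ∈ Finset.Icc 1 m, a k) (∑ k ∈ Finset.Icc 1 m, b k) ∧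
      max (∑ k ∈ Finset.Icc 1 m, a k) (∑ k ∈ Finset.Icc 1 m, b k) ≤ σ + 2 * ε := by
  set A : ℕ → ℝ := fun m ↦ ∑ k ∈ Icc 1 m, a k
  set B : ℕ → ℝ := fun m ↦ ∑ k ∈ Icc 1 m, b k
  obtain ⟨m, hmn, hbelow, hA, hB⟩ :=
    Nat.exists_lt_not_and_succ_of_not_zero (p := fun m ↦ σ ≤ A m ∧ σ ≤ B m)
      (by simp [A, hσ0]) (n := n) ⟨by simp [A, ha1]; linarith, by simp [B, hb1]; linarith⟩
  have hm : m + 1 ∈ Icc 1 n := mem_Icc.2 ⟨Nat.le_add_left 1 m, hmn⟩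
  have hsub : Icc 1 (m + 1) ⊆ Icc 1 n := Icc_subset_Icc_right hmn
  have hAB : A (m + 1) - B (m + 1) ≤ ε :=
    (sum_sub_sum_le_sum_sub_sum_of_subset hsub (fun k hk ↦ (hcab k hk).trans (min_le_left ..))
      fun k hk ↦ (hcab k (hsub hk)).trans (min_le_right ..)).trans (by linarith)
  have hBA : B (m + 1) - A (m + 1) ≤ ε :=
    (sum_sub_sum_le_sum_sub_sum_of_subset hsub (fun k hk ↦ (hcab k hk).trans (min_le_right ..))
      fun k hk ↦ (hcab k (hsub hk)).trans (min_le_left ..)).trans (by linarith)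
  have hAstep : A (m + 1) = A m + a (m + 1) := sum_Icc_succ_top (Nat.le_add_left 1 m) a
  have hBstep : B (m + 1) = B m + b (m + 1) := sum_Icc_succ_top (Nat.le_add_left 1 m) b
  have ham := haε _ hm
  have hbm := hbε _ hm
  have hbelow' : A m < σ ∨ B m < σ := by simpa only [not_and_or, not_le] using hbelow
  refine ⟨m + 1, hm, le_min hA hB, max_le ?_ ?_⟩ <;> rcases hbelow' with h | h <;> linarith

/-- Let `a, b, c : {1,…,n} → ℝ` be nonnegative with
`Σ a = Σ b = 1`, `c k ≤ min (a k) (b k)` for all `k`, `Σ c ≥ 1 − ε`, and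
`a k ≤ ε`, `b k ≤ ε` for all `k`, where `ε ≥ 0`. Then for every `0 < σ < 1/2`
there is an index `m` whose partial sums `A_m`, `B_m` satisfy
`σ ≤ min A_m B_m` and `max A_m B_m ≤ σ + 2ε`. -/
theorem partial_sums_balanced_cut
    (n : ℕ) (hn : 1 ≤ n) (a b c : ℕ → ℝ) (ε σ : ℝ) (hε : 0 ≤ ε)
    (ha0 : ∀ k ∈ Finset.Icc 1 n, 0 ≤ a k)
    (hb0 : ∀ k ∈ Finset.Icc 1 n, 0 ≤ b k)
    (hc0 : ∀ k ∈ Finset.Icc 1 n, 0 ≤ c k)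
    (ha1 : ∑ k ∈ Finset.Icc 1 n, a k = 1)
    (hb1 : ∑ k ∈ Finset.Icc 1 n, b k = 1)
    (hcab : ∀ k ∈ Finset.Icc 1 n, c k ≤ min (a k) (b k))
    (hcsum : 1 - ε ≤ ∑ k ∈ Finset.Icc 1 n, c k)
    (haε : ∀ k ∈ Finset.Icc 1 n, a k ≤ ε)
    (hbε : ∀ k ∈ Finset.Icc 1 n, b k ≤ ε)
    (hσ0 : 0 < σ) (hσ : σ < 1 / 2) :
    ∃ m ∈ Finset.Icc 1 n,
      σ ≤ min (∑ k ∈ Finset.Icc 1 m, a k) (∑ k ∈ Finset.Icc 1 m, b k) ∧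
      max (∑ k ∈ Finset.Icc 1 m, a k) (∑ k ∈ Finset.Icc 1 m, b k) ≤ σ + 2 * ε :=
  partial_sums_balanced_cut_general n a b c ε σ ha1 hb1 hcab hcsum haε hbε hσ0 hσ
end

section
/- Let S be a finite set and for each s ∈ S let N_s be a quantum channel from d×d to d'×d' complex matrices. Let 𝔖 = {ρ_1,…,ρ_K} be density matrices on ℂ^d and suppose there exist p_1,…,p_K ∈ 𝔓(S) such that Σ_{s∈S} p_i(s) N_s(ρ_j) = Σ_{s∈S} p_j(s) N_s(ρ_i) for all i,j ∈ {1,…,K}. Then for every N ≥ K and every choice of density matrices ρ_{K+1},…,ρ_N in the convex hull of 𝔖, there exist p_{K+1},…,p_N ∈ 𝔓(S) such that Σ_{s∈S} p_i(s) N_s(ρ_j) = Σ_{s∈S} p_j(s) N_s(ρ_i) for all i,j ∈ {1,…,N}. -/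
open scoped ComplexOrder
/-- A probability distribution on the finite set `S`. -/
def IsProbDist {S : Type*} [Fintype S] (p : S → ℝ) : Prop :=
  (∀ s, 0 ≤ p s) ∧ ∑ s, p s = 1

/-- A density matrix (quantum state) on `ℂ^d`: positive semidefinite with trace one. -/
def IsDensityMatrix {d : ℕ} (ρ : Matrix (Fin d) (Fin d) ℂ) : Prop :=
  ρ.PosSemidef ∧ ρ.trace = 1

/-- The application of `id_{k×k} ⊗ N` to a matrix on `ℂ^k ⊗ ℂ^d`, written in block form. -/
def blockApply {d d' : ℕ} (N : Matrix (Fin d) (Fin d) ℂ →ₗ[ℂ] Matrix (Fin d') (Fin d') ℂ)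
    (k : ℕ) (M : Matrix (Fin k × Fin d) (Fin k × Fin d) ℂ) :
    Matrix (Fin k × Fin d') (Fin k × Fin d') ℂ :=
  Matrix.of fun pq rs => N (Matrix.of fun a b => M (pq.1, a) (rs.1, b)) pq.2 rs.2

/-- Complete positivity: all the block extensions `id_k ⊗ N` map positive semidefinite
matrices to positive semidefinite matrices. -/
def IsCompletelyPositive {d d' : ℕ}
    (N : Matrix (Fin d) (Fin d) ℂ →ₗ[ℂ] Matrix (Fin d') (Fin d') ℂ) : Prop :=
  ∀ (k : ℕ) (M : Matrix (Fin k × Fin d) (Fin k × Fin d) ℂ),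
    M.PosSemidef → (blockApply N k M).PosSemidef

/-- A quantum channel: a linear, completely positive, trace-preserving map. -/
def IsQuantumChannel {d d' : ℕ}
    (N : Matrix (Fin d) (Fin d) ℂ →ₗ[ℂ] Matrix (Fin d') (Fin d') ℂ) : Prop :=
  IsCompletelyPositive N ∧ ∀ M, (N M).trace = M.trace

/-!
The pairing `B(q, ρ) = ∑ₛ q(s) • Nₛ(ρ)` is real-bilinear, and the hypothesis says that it is
symmetric on the pairs `(pᵢ, ρᵢ)`, `i < K`. Writing every state in barycentric coordinates
`ρᵢ = ∑ₖ cᵢₖ ρₖ` over the first `K` states and putting `qᵢ = ∑ₖ cᵢₖ pₖ`, bilinearity gives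
`B(qᵢ, ρⱼ) = ∑ₖₗ cᵢₖ cⱼₗ B(pₖ, ρₗ)`, which is symmetric in `i, j`; and `qᵢ ∈ 𝔓(S)` because
`𝔓(S)` is convex.
-/

open Set

theorem isProbDist_iff_mem_stdSimplex {S : Type*} [Fintype S] {p : S → ℝ} :
    IsProbDist p ↔ p ∈ stdSimplex ℝ S :=
  Iff.rfl

theorem LinearMap.apply_linearCombination_symm {R P M E ι : Type*} [CommSemiring R]
    [AddCommMonoid P] [Module R P] [AddCommMonoid M] [Module R M] [AddCommMonoid E] [Module R E]
    [Fintype ι] (B : P →ₗ[R] M →ₗ[R] E) {p : ι → P} {x : ι → M}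
    (hsym : ∀ k l, B (p k) (x l) = B (p l) (x k)) (v w : ι → R) :
    B (Fintype.linearCombination R p v) (Fintype.linearCombination R x w) =
      B (Fintype.linearCombination R p w) (Fintype.linearCombination R x v) := by
  simp only [Fintype.linearCombination_apply, map_sum, map_smul, LinearMap.sum_apply,
    LinearMap.smul_apply, Finset.smul_sum]
  conv_rhs => rw [Finset.sum_comm]
  exact Finset.sum_congr rfl fun _ _ ↦ Finset.sum_congr rfl fun _ _ ↦ by rw [hsym, smul_comm]

theorem convexHull_range_eq_image_stdSimplex {R E ι : Type*} [Field R] [LinearOrder R]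
    [IsStrictOrderedRing R] [AddCommGroup E] [Module R E] [Fintype ι] (v : ι → E) :
    convexHull R (range v) = Fintype.linearCombination R v '' stdSimplex R ι := by
  classical
  rw [← convexHull_rangle_single_eq_stdSimplex, LinearMap.image_convexHull, ← range_comp]
  simp [Function.comp_def]

theorem exists_stdSimplex_coords_of_mem_convexHull {E : Type*} [AddCommGroup E] [Module ℝ E]
    {K n : ℕ} {x : ℕ → E}
    (hconv : ∀ i, K ≤ i → i < n → x i ∈ convexHull ℝ (x '' Iio K)) :
    ∃ c : ℕ → Fin K → ℝ, (∀ i (hi : i < K), c i = Pi.single ⟨i, hi⟩ 1) ∧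
      ∀ i < n, c i ∈ stdSimplex ℝ (Fin K) ∧
        x i = Fintype.linearCombination ℝ (fun k : Fin K ↦ x k) (c i) := by
  have hcoords : ∀ i, K ≤ i → i < n → ∃ w ∈ stdSimplex ℝ (Fin K),
      x i = Fintype.linearCombination ℝ (fun k : Fin K ↦ x k) w := fun i hKi hin ↦ by
    have hmem := hconv i hKi hin
    rw [← Fin.range_val, ← range_comp, convexHull_range_eq_image_stdSimplex] at hmem
    obtain ⟨w, hw, hwx⟩ := hmem
    exact ⟨w, hw, hwx.symm⟩
  choose! w hw hwx using hcoords
  refine ⟨fun i ↦ if hi : i < K then Pi.single ⟨i, hi⟩ 1 else w i,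
    fun i hi ↦ dif_pos hi, fun i hin ↦ ?_⟩
  by_cases hiK : i < K
  · simp [hiK, single_mem_stdSimplex]
  · simpa [hiK] using ⟨hw i (not_lt.1 hiK) hin, hwx i (not_lt.1 hiK) hin⟩

theorem convex_extension_of_symmetrizing_distributions_states_general
    {S : Type} [Fintype S] (d d' : ℕ)
    (N : S → (Matrix (Fin d) (Fin d) ℂ →ₗ[ℂ] Matrix (Fin d') (Fin d') ℂ))
    (K NN : ℕ)
    (ρ : ℕ → Matrix (Fin d) (Fin d) ℂ) (p : ℕ → S → ℝ)
    (hp : ∀ i < K, IsProbDist (p i))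
    (hsym : ∀ i < K, ∀ j < K,
      ∑ s : S, p i s • N s (ρ j) = ∑ s : S, p j s • N s (ρ i))
    (hconv : ∀ i, K ≤ i → i < NN →
      ρ i ∈ convexHull ℝ (ρ '' (Set.Iio K))) :
    ∃ q : ℕ → S → ℝ,
      (∀ i < NN, IsProbDist (q i)) ∧
      (∀ i < K, q i = p i) ∧
      (∀ i < NN, ∀ j < NN,
        ∑ s : S, q i s • N s (ρ j) = ∑ s : S, q j s • N s (ρ i)) := by
  obtain ⟨c, hc_single, hc⟩ := exists_stdSimplex_coords_of_mem_convexHull hconv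
  let B := Fintype.linearCombination ℝ fun s ↦ (N s).restrictScalars ℝ
  have hB : ∀ q M, ∑ s, q s • N s M = B q M := fun q M ↦ by
    simp [B, Fintype.linearCombination_apply]
  let P := Fintype.linearCombination ℝ fun k : Fin K ↦ p k
  refine ⟨fun i ↦ P (c i), fun i hi ↦ ?_, fun i hi ↦ ?_, fun i hi j hj ↦ ?_⟩
  · rw [isProbDist_iff_mem_stdSimplex]
    refine (convex_stdSimplex ℝ S).sum_mem (fun k _ ↦ (hc i hi).1.1 k) (hc i hi).1.2 fun k _ ↦ ?_
    exact isProbDist_iff_mem_stdSimplex.1 (hp k k.2)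
  · simp [P, hc_single i hi]
  · simp only [hB] at hsym ⊢
    rw [(hc i hi).2, (hc j hj).2]
    exact B.apply_linearCombination_symm (fun (k l : Fin K) ↦ hsym k k.2 l l.2) (c i) (c j)

/-- Let `{N_s}_{s∈S}` be a finite family of quantum channels. If the
density matrices `ρ 0, …, ρ (K-1)` admit distributions `p 0, …, p (K-1) ∈ 𝔓(S)` with
`Σ_s p_i(s) N_s(ρ_j) = Σ_s p_j(s) N_s(ρ_i)` for all `i, j < K`, then for every `N ≥ K`
and density matrices `ρ K, …, ρ (N-1)` in the convex hull of `{ρ 0, …, ρ (K-1)}` there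
exist distributions for the new states, extending the given ones, such that the
symmetrization identities hold for all `i, j < N`. -/
theorem convex_extension_of_symmetrizing_distributions_states
    {S : Type} [Fintype S] (d d' : ℕ)
    (N : S → (Matrix (Fin d) (Fin d) ℂ →ₗ[ℂ] Matrix (Fin d') (Fin d') ℂ))
    (hchan : ∀ s, IsQuantumChannel (N s))
    (K NN : ℕ) (hKN : K ≤ NN)
    (ρ : ℕ → Matrix (Fin d) (Fin d) ℂ) (p : ℕ → S → ℝ)
    (hρ : ∀ i < NN, IsDensityMatrix (ρ i))
    (hp : ∀ i < K, IsProbDist (p i))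
    (hsym : ∀ i < K, ∀ j < K,
      ∑ s : S, p i s • N s (ρ j) = ∑ s : S, p j s • N s (ρ i))
    (hconv : ∀ i, K ≤ i → i < NN →
      ρ i ∈ convexHull ℝ (ρ '' (Set.Iio K))) :
    ∃ q : ℕ → S → ℝ,
      (∀ i < NN, IsProbDist (q i)) ∧
      (∀ i < K, q i = p i) ∧
      (∀ i < NN, ∀ j < NN,
        ∑ s : S, q i s • N s (ρ j) = ∑ s : S, q j s • N s (ρ i)) :=
  convex_extension_of_symmetrizing_distributions_states_general d d' N K NN ρ p hp hsym hconv
end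

section
/- Let S be a finite set and for each s ∈ S let N_s be a quantum channel from d×d to d'×d' complex matrices. Let 𝔖 = {ρ_1,…,ρ_K} be density matrices on ℂ^d for which there exists NO collection p_1,…,p_K ∈ 𝔓(S) satisfying Σ_{s∈S} p_i(s) N_s(ρ_j) = Σ_{s∈S} p_j(s) N_s(ρ_i) for all i,j ∈ {1,…,K}. Then for every finite set 𝔖' = {σ_1,…,σ_{K'}} of density matrices on ℂ^d whose convex hull contains the convex hull of 𝔖, there exists no collection p_1,…,p_{K'} ∈ 𝔓(S) satisfying Σ_{s∈S} p_i(s) N_s(σ_j) = Σ_{s∈S} p_j(s) N_s(σ_i) for all i,j ∈ {1,…,K'}. -/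
/-!
Suppose `p` symmetrizes the `σ_j`. Each `ρ_i` lies in the convex hull of the `σ_j`, so it lifts
to a point `(q_i, ρ_i)` of the convex hull of the pairs `(p_j, σ_j)`. The `q_i` are probability
distributions because the simplex is convex, and they symmetrize the `ρ_i` because
`((q, x), (r, y)) ↦ ∑ s, q s • N s y - ∑ s, r s • N s x` is bilinear, hence vanishes on the span
of any set on which it vanishes pairwise. This contradicts the hypothesis on the `ρ_i`.
-/

open scoped ComplexOrder

section Bilinear

variable {R M N P : Type*} [CommRing R] [AddCommGroup M] [Module R M] [AddCommGroup N]
  [Module R N] [AddCommGroup P] [Module R P]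

theorem LinearMap.apply_eq_zero_of_mem_span (B : M →ₗ[R] N →ₗ[R] P) {s : Set M} {t : Set N}
    (h : ∀ x ∈ s, ∀ y ∈ t, B x y = 0) {x : M} {y : N} (hx : x ∈ Submodule.span R s)
    (hy : y ∈ Submodule.span R t) : B x y = 0 := by
  have hxt : ∀ y ∈ t, B x y = 0 := fun y hy =>
    LinearMap.eqOn_span (f := B.flip y) (g := 0) (fun x hx => h x hx y hy) hx
  exact LinearMap.eqOn_span (f := B x) (g := 0) hxt hy

theorem LinearMap.apply_fst_snd_comm_of_mem_span (B : M →ₗ[R] N →ₗ[R] P) {s : Set (M × N)}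
    (hs : ∀ u ∈ s, ∀ v ∈ s, B u.1 v.2 = B v.1 u.2) {u v : M × N}
    (hu : u ∈ Submodule.span R s) (hv : v ∈ Submodule.span R s) : B u.1 v.2 = B v.1 u.2 := by
  let A := B.compl₁₂ (LinearMap.fst R M N) (LinearMap.snd R M N) -
    (B.compl₁₂ (LinearMap.fst R M N) (LinearMap.snd R M N)).flip
  have hA : ∀ u v, A u v = B u.1 v.2 - B v.1 u.2 := fun _ _ => rfl
  rw [← sub_eq_zero, ← hA]
  exact A.apply_eq_zero_of_mem_span
    (fun u hu v hv => (hA u v).trans (sub_eq_zero.2 (hs u hu v hv))) hu hv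

end Bilinear

theorem exists_mem_convexHull_image_prod {ι M N : Type*} [AddCommGroup M] [Module ℝ M]
    [AddCommGroup N] [Module ℝ N] {f : ι → M} {g : ι → N} {t : Set ι} {y : N}
    (hy : y ∈ convexHull ℝ (g '' t)) : ∃ x, (x, y) ∈ convexHull ℝ ((fun i => (f i, g i)) '' t) := by
  rw [show g '' t = LinearMap.snd ℝ M N '' ((fun i => (f i, g i)) '' t) by
    rw [Set.image_image]; rfl, ← LinearMap.image_convexHull] at hy
  obtain ⟨⟨x, y⟩, hxy, rfl⟩ := hy
  exact ⟨x, hxy⟩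

variable {S E F : Type*} [Fintype S] [AddCommGroup E] [Module ℝ E] [AddCommGroup F] [Module ℝ F]

theorem isProbDist_fst_of_mem_convexHull {s : Set ((S → ℝ) × E)} (hs : ∀ u ∈ s, IsProbDist u.1)
    {u : (S → ℝ) × E} (hu : u ∈ convexHull ℝ s) : IsProbDist u.1 :=
  convexHull_min hs ((convex_stdSimplex ℝ S).linear_preimage (LinearMap.fst ℝ _ E)) hu

def mixtureMap (N : S → E →ₗ[ℝ] F) : (S → ℝ) →ₗ[ℝ] E →ₗ[ℝ] F :=
  ∑ s, (LinearMap.proj s).smulRight (N s)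

@[simp]
theorem mixtureMap_apply (N : S → E →ₗ[ℝ] F) (q : S → ℝ) (x : E) :
    mixtureMap N q x = ∑ s, q s • N s x := by
  simp [mixtureMap]

theorem no_symmetrizing_distributions_of_larger_convex_hull_general
    {S : Type} [Fintype S] (d d' : ℕ)
    (N : S → (Matrix (Fin d) (Fin d) ℂ →ₗ[ℂ] Matrix (Fin d') (Fin d') ℂ))
    (K K' : ℕ)
    (ρ : ℕ → Matrix (Fin d) (Fin d) ℂ) (sig : ℕ → Matrix (Fin d) (Fin d) ℂ)
    (hnosym : ¬ ∃ p : ℕ → S → ℝ,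
      (∀ i < K, IsProbDist (p i)) ∧
      (∀ i < K, ∀ j < K,
        ∑ s : S, p i s • N s (ρ j) = ∑ s : S, p j s • N s (ρ i)))
    (hconv : convexHull ℝ (ρ '' (Set.Iio K)) ⊆ convexHull ℝ (sig '' (Set.Iio K'))) :
    ¬ ∃ p : ℕ → S → ℝ,
      (∀ i < K', IsProbDist (p i)) ∧
      (∀ i < K', ∀ j < K',
        ∑ s : S, p i s • N s (sig j) = ∑ s : S, p j s • N s (sig i)) := by
  rintro ⟨p, hp, hsym⟩
  set T := (fun j => (p j, sig j)) '' Set.Iio K'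
  have hlift : ∀ i < K, ∃ q, (q, ρ i) ∈ convexHull ℝ T := fun i hi =>
    exists_mem_convexHull_image_prod (hconv (subset_convexHull ℝ _ ⟨i, hi, rfl⟩))
  choose! q hq using hlift
  have hspan : convexHull ℝ T ⊆ Submodule.span ℝ T :=
    convexHull_min Submodule.subset_span (Submodule.span ℝ T).convex
  let B := mixtureMap fun s => (N s).restrictScalars ℝ
  have hsymT : ∀ u ∈ T, ∀ v ∈ T, B u.1 v.2 = B v.1 u.2 := by
    rintro _ ⟨k, hk, rfl⟩ _ ⟨l, hl, rfl⟩
    simpa [B] using hsym k hk l hl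
  refine hnosym ⟨q, fun i hi => ?_, fun i hi j hj => ?_⟩
  · exact isProbDist_fst_of_mem_convexHull (by rintro _ ⟨j, hj, rfl⟩; exact hp j hj) (hq i hi)
  · simpa [B] using B.apply_fst_snd_comm_of_mem_span hsymT (hspan (hq i hi)) (hspan (hq j hj))

/-- Let `{N_s}_{s∈S}` be a finite family of quantum channels and let
`ρ 0, …, ρ (K-1)` be density matrices admitting NO collection of probability
distributions symmetrizing them. Then for every finite set `σ 0, …, σ (K'-1)` of
density matrices whose convex hull contains the convex hull of the `ρ i`, there is
no collection of probability distributions symmetrizing the `σ j` either. -/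
theorem no_symmetrizing_distributions_of_larger_convex_hull
    {S : Type} [Fintype S] (d d' : ℕ)
    (N : S → (Matrix (Fin d) (Fin d) ℂ →ₗ[ℂ] Matrix (Fin d') (Fin d') ℂ))
    (hchan : ∀ s, IsQuantumChannel (N s))
    (K K' : ℕ)
    (ρ : ℕ → Matrix (Fin d) (Fin d) ℂ) (sig : ℕ → Matrix (Fin d) (Fin d) ℂ)
    (hρ : ∀ i < K, IsDensityMatrix (ρ i))
    (hsig : ∀ i < K', IsDensityMatrix (sig i))
    (hnosym : ¬ ∃ p : ℕ → S → ℝ,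
      (∀ i < K, IsProbDist (p i)) ∧
      (∀ i < K, ∀ j < K,
        ∑ s : S, p i s • N s (ρ j) = ∑ s : S, p j s • N s (ρ i)))
    (hconv : convexHull ℝ (ρ '' (Set.Iio K)) ⊆ convexHull ℝ (sig '' (Set.Iio K'))) :
    ¬ ∃ p : ℕ → S → ℝ,
      (∀ i < K', IsProbDist (p i)) ∧
      (∀ i < K', ∀ j < K',
        ∑ s : S, p i s • N s (sig j) = ∑ s : S, p j s • N s (sig i)) :=
  no_symmetrizing_distributions_of_larger_convex_hull_general d d' N K K' ρ sig hnosym hconv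
end

section
/- Let S be a finite set and for each s ∈ S let N_s be a quantum channel from d×d to d'×d' complex matrices. Then the family {N_s}_{s∈S} is symmetrizable if and only if for every K ∈ ℕ and every collection of pure states ψ_1,…,ψ_K on ℂ^d there exist p_1,…,p_K ∈ 𝔓(S) such that Σ_{s∈S} p_i(s) N_s(ψ_j) = Σ_{s∈S} p_j(s) N_s(ψ_i) for all i,j ∈ {1,…,K}. -/
open scoped ComplexOrder
/-- A pure state on `ℂ^d`: a rank-one projection `v v*` onto a unit vector `v`. -/
def IsPureState {d : ℕ} (ψ : Matrix (Fin d) (Fin d) ℂ) : Prop :=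
  ∃ v : Fin d → ℂ, ∑ a, Complex.normSq (v a) = 1 ∧
    ψ = Matrix.of fun a b => v a * (starRingEnd ℂ) (v b)

/-- A finite family `{N_s}_{s∈S}` of quantum channels is symmetrizable if for every `K`
and all density matrices `ρ 1, …, ρ K` there are distributions `p 1, …, p K ∈ 𝔓(S)` with
`Σ_s p_i(s) N_s(ρ_j) = Σ_s p_j(s) N_s(ρ_i)` for all `i, j`. -/
def Symmetrizable {S : Type} [Fintype S] {d d' : ℕ}
    (N : S → (Matrix (Fin d) (Fin d) ℂ →ₗ[ℂ] Matrix (Fin d') (Fin d') ℂ)) : Prop :=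
  ∀ (K : ℕ) (ρ : Fin K → Matrix (Fin d) (Fin d) ℂ),
    (∀ i, IsDensityMatrix (ρ i)) →
    ∃ p : Fin K → S → ℝ,
      (∀ i, IsProbDist (p i)) ∧
      (∀ i j, ∑ s : S, p i s • N s (ρ j) = ∑ s : S, p j s • N s (ρ i))
/-!
By the spectral theorem every density matrix is a convex combination `ρ = ∑ₖ λₖ ψₖ` of pure
states. Given states `ρ₁, …, ρ_K`, symmetrize the family of all their pure components `ψ_{ik}`
by distributions `p_{ik}` and put `p_i = ∑ₖ λ_{ik} p_{ik}`. By linearity of the `N_s`, both sides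
of the symmetry relation for `ρ_i, ρ_j` expand to `∑_{k,l} λ_{ik} λ_{jl} (…)`, and the terms
agree pairwise because the `p_{ik}` symmetrize `ψ_{ik}` against `ψ_{jl}`.
-/

open Finset Matrix

lemma IsProbDist.bind {S κ : Type*} [Fintype S] [Fintype κ] {w : κ → ℝ} {q : κ → S → ℝ}
    (hw : IsProbDist w) (hq : ∀ k, IsProbDist (q k)) : IsProbDist fun s => ∑ k, w k * q k s := by
  refine ⟨fun s => sum_nonneg fun k _ => mul_nonneg (hw.1 k) ((hq k).1 s), ?_⟩
  rw [sum_comm]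
  simp [← mul_sum, (hq _).2, hw.2]

section Symmetrizer

variable {S ι κ V W : Type*} [Fintype S] [AddCommGroup V] [Module ℝ V] [AddCommGroup W]
  [Module ℝ W] {N : S → V →ₗ[ℝ] W}

def IsSymmetrizer (N : S → V →ₗ[ℝ] W) (x : ι → V) (p : ι → S → ℝ) : Prop :=
  (∀ i, IsProbDist (p i)) ∧ ∀ i j, ∑ s, p i s • N s (x j) = ∑ s, p j s • N s (x i)

lemma IsSymmetrizer.comp {x : ι → V} {p : ι → S → ℝ} (h : IsSymmetrizer N x p) (f : κ → ι) :
    IsSymmetrizer N (x ∘ f) (p ∘ f) :=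
  ⟨fun i => h.1 (f i), fun i j => h.2 (f i) (f j)⟩

lemma exists_isSymmetrizer_of_forall_fin {P : V → Prop}
    (h : ∀ (K : ℕ) (x : Fin K → V), (∀ i, P (x i)) → ∃ p, IsSymmetrizer N x p) [Finite ι]
    (x : ι → V) (hx : ∀ i, P (x i)) : ∃ p, IsSymmetrizer N x p := by
  obtain ⟨K, ⟨e⟩⟩ := Finite.exists_equiv_fin ι
  obtain ⟨p, hp⟩ := h K (x ∘ e.symm) fun i => hx _
  exact ⟨p ∘ e, by simpa [Function.comp_def] using hp.comp e⟩

lemma sum_bind_smul_map_sum [Fintype κ] (x : ι × κ → V) (p : ι × κ → S → ℝ) (w : ι → κ → ℝ)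
    (i j : ι) :
    ∑ s, (∑ k, w i k * p (i, k) s) • N s (∑ l, w j l • x (j, l)) =
      ∑ k, ∑ l, (w i k * w j l) • ∑ s, p (i, k) s • N s (x (j, l)) := by
  simp only [map_sum, map_smul, smul_sum, sum_mul, sum_smul, smul_smul]
  rw [sum_comm_cycle]
  refine sum_congr rfl fun k _ => ?_
  rw [sum_comm]
  exact sum_congr rfl fun l _ => sum_congr rfl fun s _ => by ring_nf

lemma IsSymmetrizer.bind [Fintype κ] {x : ι × κ → V} {p : ι × κ → S → ℝ}
    (h : IsSymmetrizer N x p) {w : ι → κ → ℝ} (hw : ∀ i, IsProbDist (w i)) :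
    IsSymmetrizer N (fun i => ∑ k, w i k • x (i, k)) (fun i s => ∑ k, w i k * p (i, k) s) := by
  refine ⟨fun i => (hw i).bind fun k => h.1 (i, k), fun i j => ?_⟩
  rw [sum_bind_smul_map_sum, sum_bind_smul_map_sum, sum_comm]
  exact sum_congr rfl fun l _ => sum_congr rfl fun k _ => by rw [h.2 (i, k) (j, l), mul_comm]

end Symmetrizer

lemma Matrix.IsHermitian.eq_sum_eigenvalues_smul_vecMulVec {𝕜 n : Type*} [RCLike 𝕜] [Fintype n]
    [DecidableEq n] {A : Matrix n n 𝕜} (hA : A.IsHermitian) :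
    A = ∑ k, hA.eigenvalues k •
      vecMulVec ⇑(hA.eigenvectorBasis k) (star ⇑(hA.eigenvectorBasis k)) := by
  ext a b
  conv_lhs => rw [hA.spectral_theorem, Unitary.conjStarAlgAut_apply]
  simp only [mul_apply, diagonal_apply, sum_apply, smul_apply, vecMulVec_apply,
    eigenvectorUnitary_apply, Function.comp_apply, mul_ite, mul_zero, sum_ite_eq', mem_univ,
    ↓reduceIte, star_apply, RCLike.star_def, Pi.star_apply, RCLike.real_smul_eq_coe_mul]
  exact sum_congr rfl fun k _ => by ring

lemma EuclideanSpace.sum_normSq_eq_one_of_norm_eq_one {n : Type*} [Fintype n]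
    {v : EuclideanSpace ℂ n} (hv : ‖v‖ = 1) : ∑ a, Complex.normSq (v a) = 1 := by
  calc ∑ a, Complex.normSq (v a) = ∑ a, ‖v a‖ ^ 2 := by simp only [Complex.normSq_eq_norm_sq]
    _ = ‖v‖ ^ 2 := (EuclideanSpace.norm_sq_eq v).symm
    _ = 1 := by rw [hv, one_pow]

lemma IsPureState.isDensityMatrix {d : ℕ} {ψ : Matrix (Fin d) (Fin d) ℂ} (hψ : IsPureState ψ) :
    IsDensityMatrix ψ := by
  obtain ⟨v, hv, rfl⟩ := hψ
  change (vecMulVec v (star v)).PosSemidef ∧ (vecMulVec v (star v)).trace = 1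
  refine ⟨posSemidef_vecMulVec_self_star v, ?_⟩
  rw [trace_vecMulVec]
  simp only [dotProduct, Pi.star_apply, RCLike.star_def, Complex.mul_conj]
  exact_mod_cast hv

lemma IsDensityMatrix.exists_eq_sum_smul_isPureState {d : ℕ} {ρ : Matrix (Fin d) (Fin d) ℂ}
    (hρ : IsDensityMatrix ρ) :
    ∃ (w : Fin d → ℝ) (ψ : Fin d → Matrix (Fin d) (Fin d) ℂ),
      IsProbDist w ∧ (∀ k, IsPureState (ψ k)) ∧ ∑ k, w k • ψ k = ρ := by
  have hH := hρ.1.isHermitian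
  have htrace : ∑ k, hH.eigenvalues k = 1 := by
    apply Complex.ofReal_injective
    simpa [hρ.2] using hH.trace_eq_sum_eigenvalues.symm
  exact ⟨hH.eigenvalues,
    fun k => vecMulVec ⇑(hH.eigenvectorBasis k) (star ⇑(hH.eigenvectorBasis k)),
    ⟨hρ.1.eigenvalues_nonneg, htrace⟩,
    fun k => ⟨_, EuclideanSpace.sum_normSq_eq_one_of_norm_eq_one
      (hH.eigenvectorBasis.orthonormal.1 k), rfl⟩,
    hH.eq_sum_eigenvalues_smul_vecMulVec.symm⟩

theorem symmetrizable_iff_pure_state_symmetrizable_general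
    {S : Type} [Fintype S] (d d' : ℕ)
    (N : S → (Matrix (Fin d) (Fin d) ℂ →ₗ[ℂ] Matrix (Fin d') (Fin d') ℂ)) :
    Symmetrizable N ↔
      ∀ (K : ℕ) (ψ : Fin K → Matrix (Fin d) (Fin d) ℂ),
        (∀ i, IsPureState (ψ i)) →
        ∃ p : Fin K → S → ℝ,
          (∀ i, IsProbDist (p i)) ∧
          (∀ i j, ∑ s : S, p i s • N s (ψ j) = ∑ s : S, p j s • N s (ψ i)) := by
  let Nℝ := fun s => (N s).restrictScalars ℝ
  refine ⟨fun h K ψ hψ => h K ψ fun i => (hψ i).isDensityMatrix, fun h K ρ hρ => ?_⟩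
  choose w ψ hw hψ hρψ using fun i => (hρ i).exists_eq_sum_smul_isPureState
  obtain ⟨p, hp⟩ := exists_isSymmetrizer_of_forall_fin (N := Nℝ) h
    (fun ik : Fin K × Fin d => ψ ik.1 ik.2) fun ik => hψ ik.1 ik.2
  have hρ_eq : (fun i => ∑ k, w i k • ψ i k) = ρ := funext hρψ
  exact ⟨_, hρ_eq ▸ hp.bind hw⟩

/-- A finite family of quantum channels is symmetrizable if and only if
every finite collection of pure states can be symmetrized. -/
theorem symmetrizable_iff_pure_state_symmetrizable
    {S : Type} [Fintype S] (d d' : ℕ)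
    (N : S → (Matrix (Fin d) (Fin d) ℂ →ₗ[ℂ] Matrix (Fin d') (Fin d') ℂ))
    (hchan : ∀ s, IsQuantumChannel (N s)) :
    Symmetrizable N ↔
      ∀ (K : ℕ) (ψ : Fin K → Matrix (Fin d) (Fin d) ℂ),
        (∀ i, IsPureState (ψ i)) →
        ∃ p : Fin K → S → ℝ,
          (∀ i, IsProbDist (p i)) ∧
          (∀ i j, ∑ s : S, p i s • N s (ψ j) = ∑ s : S, p j s • N s (ψ i)) :=
  symmetrizable_iff_pure_state_symmetrizable_general d d' N
end

section
/- Let K ∈ ℕ, K ≥ 1, let δ ≥ 0 and ε ∈ ℝ, and let X_1,…,X_K be independent, identically distributed random variables on a probability space (Ω, 𝒜, ℙ), each taking values in [0,1] almost surely and satisfying 𝔼[X_1] ≥ 1−δ. Then ℙ(1 − (1/K) Σ_{j=1}^K X_j ≥ ε) ≤ 2^{−K(ε−2δ)}. -/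
/-!
Chernoff's bound at `t = log 2` applied to the deficits `Y j = 1 - X j`, which lie in `[0,1]` and
have mean at most `δ`. Convexity gives `2 ^ y ≤ 1 + y` on `[0,1]`, so each moment generating
function `𝔼[2 ^ Y j]` is at most `1 + δ ≤ 2 ^ (2δ)`, and independence multiplies these bounds.
-/

open MeasureTheory ProbabilityTheory Real

lemma two_rpow_le_one_add {y : ℝ} (h0 : 0 ≤ y) (h1 : y ≤ 1) : (2 : ℝ) ^ y ≤ 1 + y := by
  simpa [one_add_one_eq_two, add_comm] using
    rpow_one_add_le_one_add_mul_self (s := 1) (by norm_num) h0 h1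

lemma one_add_le_two_rpow_two_mul {δ : ℝ} (hδ : 0 ≤ δ) : 1 + δ ≤ (2 : ℝ) ^ (2 * δ) := by
  have hlog : (1 : ℝ) / 2 < log 2 := by linarith [log_two_gt_d9]
  rw [rpow_def_of_pos two_pos]
  nlinarith [add_one_le_exp (log 2 * (2 * δ))]

section

variable {Ω : Type*} [MeasurableSpace Ω] {μ : Measure Ω}

lemma mgf_log_two_le_one_add_integral [IsProbabilityMeasure μ] {Y : Ω → ℝ}
    (hY : AEMeasurable Y μ) (hrange : ∀ᵐ ω ∂μ, Y ω ∈ Set.Icc (0 : ℝ) 1) :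
    mgf Y μ (log 2) ≤ 1 + μ[Y] := by
  have hYint : Integrable Y μ := .of_mem_Icc 0 1 hY hrange
  calc mgf Y μ (log 2) = ∫ ω, (2 : ℝ) ^ Y ω ∂μ := by simp only [mgf, rpow_def_of_pos two_pos]
    _ ≤ ∫ ω, (1 + Y ω) ∂μ := by
      refine integral_mono_ae ?_ ((integrable_const 1).add hYint) ?_
      · simpa only [rpow_def_of_pos two_pos] using integrable_exp_mul_of_mem_Icc hY hrange
      · filter_upwards [hrange] with ω hω using two_rpow_le_one_add hω.1 hω.2
    _ = 1 + μ[Y] := by simp [integral_add (integrable_const 1) hYint]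

theorem measureReal_sum_ge_le_two_rpow {ι : Type*} [Fintype ι] {Y : ι → Ω → ℝ}
    (hmeas : ∀ i, AEMeasurable (Y i) μ) (hindep : iIndepFun Y μ)
    (hrange : ∀ i, ∀ᵐ ω ∂μ, Y i ω ∈ Set.Icc (0 : ℝ) 1) {δ : ℝ} (hδ : 0 ≤ δ)
    (hmean : ∀ i, μ[Y i] ≤ δ) (t : ℝ) :
    μ.real {ω | t ≤ ∑ i, Y i ω} ≤ 2 ^ (-(t - 2 * δ * Fintype.card ι)) := by
  have := hindep.isProbabilityMeasure
  have hsum_le : ∀ᵐ ω ∂μ, (∑ i, Y i) ω ≤ Fintype.card ι := by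
    filter_upwards [ae_all_iff.mpr hrange] with ω hω
    simpa [Finset.sum_apply] using Finset.sum_le_sum fun i (_ : i ∈ Finset.univ) => (hω i).2
  have hint := integrable_exp_mul_of_le (log 2) _ (log_nonneg one_le_two)
    (by fun_prop) hsum_le
  calc μ.real {ω | t ≤ ∑ i, Y i ω}
      ≤ exp (-log 2 * t) * mgf (∑ i, Y i) μ (log 2) := by
        simpa only [Finset.sum_apply] using measure_ge_le_exp_mul_mgf t (log_nonneg one_le_two) hint
    _ = 2 ^ (-t) * ∏ i, mgf (Y i) μ (log 2) := by
        rw [hindep.mgf_sum₀ hmeas, rpow_def_of_pos two_pos, neg_mul_comm]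
    _ ≤ 2 ^ (-t) * ∏ _i : ι, (2 : ℝ) ^ (2 * δ) := by
        gcongr with i
        · exact fun i _ => mgf_nonneg
        · calc mgf (Y i) μ (log 2) ≤ 1 + μ[Y i] :=
                mgf_log_two_le_one_add_integral (hmeas i) (hrange i)
            _ ≤ 1 + δ := by linarith [hmean i]
            _ ≤ 2 ^ (2 * δ) := one_add_le_two_rpow_two_mul hδ
    _ = 2 ^ (-(t - 2 * δ * Fintype.card ι)) := by
        rw [Finset.prod_const, Finset.card_univ, ← rpow_mul_natCast zero_le_two, ← rpow_add two_pos]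
        ring_nf

end

theorem iid_average_large_deviation_bound_general
    {Ω : Type*} [MeasurableSpace Ω] (P : Measure Ω) [IsProbabilityMeasure P]
    (K : ℕ) (hK : 0 < K) (δ ε : ℝ) (hδ : 0 ≤ δ)
    (X : Fin K → Ω → ℝ)
    (hindep : iIndepFun X P)
    (hident : ∀ j, IdentDistrib (X j) (X ⟨0, hK⟩) P P)
    (hrange : ∀ j, ∀ᵐ ω ∂P, X j ω ∈ Set.Icc (0 : ℝ) 1)
    (hmean : 1 - δ ≤ ∫ ω, X ⟨0, hK⟩ ω ∂P) :
    P {ω | ε ≤ 1 - (1 / (K : ℝ)) * ∑ j, X j ω} ≤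
      ENNReal.ofReal ((2 : ℝ) ^ (-(K : ℝ) * (ε - 2 * δ))) := by
  set Y : Fin K → Ω → ℝ := fun j ω => 1 - X j ω with hY
  have hXmeas (j : Fin K) : AEMeasurable (X j) P := (hident j).aemeasurable_fst
  have hYrange (j : Fin K) : ∀ᵐ ω ∂P, Y j ω ∈ Set.Icc (0 : ℝ) 1 := by
    filter_upwards [hrange j] with ω hω
    exact ⟨by linarith [hω.2], by linarith [hω.1]⟩
  have hYmean (j : Fin K) : P[Y j] ≤ δ := by
    rw [integral_sub (integrable_const 1) (.of_mem_Icc 0 1 (hXmeas j) (hrange j)),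
      (hident j).integral_eq]
    simp only [integral_const, probReal_univ, smul_eq_mul, one_mul]
    linarith
  have hevent : {ω | ε ≤ 1 - (1 / (K : ℝ)) * ∑ j, X j ω} = {ω | K * ε ≤ ∑ j, Y j ω} := by
    ext ω
    have hKpos : (0 : ℝ) < K := Nat.cast_pos.mpr hK
    simp only [Set.mem_ofPred_eq, hY, Finset.sum_sub_distrib, Finset.sum_const, Finset.card_univ,
      Fintype.card_fin, nsmul_eq_mul, mul_one]
    rw [← mul_le_mul_iff_right₀ hKpos, mul_sub, ← mul_assoc, mul_one_div_cancel hKpos.ne', one_mul,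
      mul_one]
  rw [hevent, ← ofReal_measureReal]
  refine ENNReal.ofReal_le_ofReal ((measureReal_sum_ge_le_two_rpow
    (fun j => (hXmeas j).const_sub 1) (hindep.comp (fun _ x => 1 - x) fun _ => by fun_prop)
    hYrange hδ hYmean _).trans_eq ?_)
  simp only [Fintype.card_fin]
  ring_nf

/-- Let `X 1, …, X K` be i.i.d. random variables with values in `[0,1]`
almost surely and expectation at least `1 − δ` (with `δ ≥ 0`). Then
`ℙ(1 − (1/K) Σ_j X_j ≥ ε) ≤ 2^{−K(ε − 2δ)}`. -/
theorem iid_average_large_deviation_bound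
    {Ω : Type*} [MeasurableSpace Ω] (P : Measure Ω) [IsProbabilityMeasure P]
    (K : ℕ) (hK : 0 < K) (δ ε : ℝ) (hδ : 0 ≤ δ)
    (X : Fin K → Ω → ℝ) (hmeas : ∀ j, Measurable (X j))
    (hindep : iIndepFun X P)
    (hident : ∀ j, IdentDistrib (X j) (X ⟨0, hK⟩) P P)
    (hrange : ∀ j, ∀ᵐ ω ∂P, X j ω ∈ Set.Icc (0 : ℝ) 1)
    (hmean : 1 - δ ≤ ∫ ω, X ⟨0, hK⟩ ω ∂P) :
    P {ω | ε ≤ 1 - (1 / (K : ℝ)) * ∑ j, X j ω} ≤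
      ENNReal.ofReal ((2 : ℝ) ^ (-(K : ℝ) * (ε - 2 * δ))) :=
  iid_average_large_deviation_bound_general P K hK δ ε hδ X hindep hident hrange hmean
end

section
/- Let X and Y be finite nonempty sets and let p ∈ 𝔓(X×Y) satisfy p ≠ p_X ⊗ p_Y, i.e. there exists (x,y) ∈ X×Y with p(x,y) ≠ p_X(x)·p_Y(y). Then there exist functions f : X → {0,1} and g : Y → {0,1} such that the pushforward distribution q ∈ 𝔓({0,1}×{0,1}) of p under (x,y) ↦ (f(x),g(y)) satisfies q ≠ q₁ ⊗ q₂, where q₁ and q₂ are the marginal distributions of q. -/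
/-! Binarize by the indicators of a pair `(x₀, y₀)` at which `p` differs from the product of
its marginals: then `q (0, 0) = p (x₀, y₀)`, while the marginals of `q` at `0` are
`p_X x₀` and `p_Y y₀`. -/

open Finset

section Sums

variable {X Y M : Type*} [Fintype X] [Fintype Y] [AddCommMonoid M]

theorem sum_ite_fst_eq [DecidableEq X] (p : X × Y → M) (x₀ : X) :
    ∑ xy : X × Y, (if xy.1 = x₀ then p xy else 0) = ∑ y, p (x₀, y) := by
  rw [Fintype.sum_prod_type,
    Fintype.sum_eq_single x₀ fun x hx => sum_eq_zero fun y _ => if_neg hx]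
  exact sum_congr rfl fun y _ => if_pos rfl

theorem sum_ite_snd_eq [DecidableEq Y] (p : X × Y → M) (y₀ : Y) :
    ∑ xy : X × Y, (if xy.2 = y₀ then p xy else 0) = ∑ x, p (x, y₀) := by
  rw [Fintype.sum_prod_type_right,
    Fintype.sum_eq_single y₀ fun y hy => sum_eq_zero fun x _ => if_neg hy]
  exact sum_congr rfl fun x _ => if_pos rfl

theorem sum_ite_fst_eq_and_snd_eq [DecidableEq X] [DecidableEq Y] (p : X × Y → M)
    (x₀ : X) (y₀ : Y) :
    ∑ xy : X × Y, (if xy.1 = x₀ ∧ xy.2 = y₀ then p xy else 0) = p (x₀, y₀) := by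
  rw [Fintype.sum_eq_single (x₀, y₀) fun xy hxy => if_neg fun h => hxy (Prod.ext h.1 h.2)]
  exact if_pos ⟨rfl, rfl⟩

end Sums

def binarize {X : Type*} [DecidableEq X] (x₀ : X) (x : X) : Fin 2 :=
  if x = x₀ then 0 else 1

@[simp]
theorem binarize_eq_zero_iff {X : Type*} [DecidableEq X] {x₀ x : X} :
    binarize x₀ x = 0 ↔ x = x₀ := by
  unfold binarize
  split_ifs <;> simpa

theorem binary_preprocessing_preserves_correlation_general
    {X Y : Type} [Fintype X] [Fintype Y]
    (p : X × Y → ℝ)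
    (hne : ∃ xy : X × Y, p xy ≠ (∑ y : Y, p (xy.1, y)) * (∑ x : X, p (x, xy.2))) :
    ∃ (f : X → Fin 2) (g : Y → Fin 2) (a b : Fin 2),
      (∑ xy : X × Y, if f xy.1 = a ∧ g xy.2 = b then p xy else 0) ≠
        (∑ xy : X × Y, if f xy.1 = a then p xy else 0) *
          (∑ xy : X × Y, if g xy.2 = b then p xy else 0) := by
  classical
  obtain ⟨⟨x₀, y₀⟩, hne⟩ := hne
  refine ⟨binarize x₀, binarize y₀, 0, 0, ?_⟩
  simpa only [binarize_eq_zero_iff, sum_ite_fst_eq_and_snd_eq, sum_ite_fst_eq, sum_ite_snd_eq]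

/-- If the distribution `p` on `X × Y` is not the product of its
marginals, then there are binarizations `f : X → {0,1}` and `g : Y → {0,1}` such that
the pushforward distribution `q` of `p` under `(x,y) ↦ (f x, g y)` is not the product
of its marginals either. -/
theorem binary_preprocessing_preserves_correlation
    {X Y : Type} [Fintype X] [Fintype Y] [Nonempty X] [Nonempty Y]
    (p : X × Y → ℝ) (hp0 : ∀ xy : X × Y, 0 ≤ p xy)
    (hp1 : ∑ xy : X × Y, p xy = 1)
    (hne : ∃ xy : X × Y, p xy ≠ (∑ y : Y, p (xy.1, y)) * (∑ x : X, p (x, xy.2))) :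
    ∃ (f : X → Fin 2) (g : Y → Fin 2) (a b : Fin 2),
      (∑ xy : X × Y, if f xy.1 = a ∧ g xy.2 = b then p xy else 0) ≠
        (∑ xy : X × Y, if f xy.1 = a then p xy else 0) *
          (∑ xy : X × Y, if g xy.2 = b then p xy else 0) :=
  binary_preprocessing_preserves_correlation_general p hne
end

section
/- Let S be a finite nonempty set and for each s ∈ S let N_s be a trace-preserving linear map from d×d to d'×d' complex matrices (for instance a quantum channel). Let ρ_1, ρ_2 be density matrices on ℂ^d, let D_1, D_2 be positive semidefinite d'×d' complex matrices with D_1 + D_2 = 𝟙, and let 0 ≤ ε < 1/4. Suppose that tr(D_i N_s(ρ_i)) ≥ 1−2ε for all s ∈ S and i ∈ {1,2}. Then there exist no p, q ∈ 𝔓(S) such that Σ_{s∈S} p(s) N_s(ρ_1) = Σ_{s∈S} q(s) N_s(ρ_2). -/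
/-!
Both sides of the supposed identity are one and the same matrix `σ`, of trace one. Since
`D₁ + D₂ = 𝟙`, the success probabilities `tr(D₁ σ)` and `tr(D₂ σ)` add up to `tr σ = 1`; but
each is a convex combination of numbers at least `1 - 2ε`, so `2 - 4ε ≤ 1`, contradicting
`ε < 1/4`.
-/

open scoped ComplexOrder

section Mixture

variable {S : Type*} [Fintype S] {n : Type*} [Fintype n]

lemma IsProbDist.le_sum_mul {p f : S → ℝ} {a : ℝ} (hp : IsProbDist p) (h : ∀ s, a ≤ f s) :
    a ≤ ∑ s, p s * f s :=
  calc a = ∑ s, p s * a := by rw [← Finset.sum_mul, hp.2, one_mul]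
    _ ≤ ∑ s, p s * f s := Finset.sum_le_sum fun s _ => mul_le_mul_of_nonneg_left (h s) (hp.1 s)

lemma Matrix.re_trace_mul_sum_smul (D : Matrix n n ℂ) (c : S → ℝ) (τ : S → Matrix n n ℂ) :
    (D * ∑ s, c s • τ s).trace.re = ∑ s, c s * (D * τ s).trace.re := by
  rw [Matrix.mul_sum, Matrix.trace_sum, Complex.re_sum]
  refine Finset.sum_congr rfl fun s _ => ?_
  rw [Matrix.mul_smul, Matrix.trace_smul, Complex.real_smul, Complex.re_ofReal_mul]

lemma IsProbDist.le_re_trace_mul_sum_smul {p : S → ℝ} (hp : IsProbDist p) {a : ℝ}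
    {D : Matrix n n ℂ} {τ : S → Matrix n n ℂ} (h : ∀ s, a ≤ (D * τ s).trace.re) :
    a ≤ (D * ∑ s, p s • τ s).trace.re := by
  rw [Matrix.re_trace_mul_sum_smul]
  exact hp.le_sum_mul h

lemma IsProbDist.trace_sum_smul_map {m : Type*} [Fintype m] {q : S → ℝ} (hq : IsProbDist q)
    {N : S → Matrix m m ℂ →ₗ[ℂ] Matrix n n ℂ} (htp : ∀ s M, (N s M).trace = M.trace)
    {ρ : Matrix m m ℂ} (hρ : ρ.trace = 1) :
    (∑ s, q s • N s ρ).trace = 1 := by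
  simp only [Matrix.trace_sum, Matrix.trace_smul, htp, hρ, ← Finset.sum_smul, hq.2, one_smul]

end Mixture

lemma Matrix.re_trace_mul_add_re_trace_mul_of_add_eq_one {n : Type*} [Fintype n] [DecidableEq n]
    {D₁ D₂ : Matrix n n ℂ} (hD : D₁ + D₂ = 1) (σ : Matrix n n ℂ) :
    (D₁ * σ).trace.re + (D₂ * σ).trace.re = σ.trace.re := by
  rw [← Complex.add_re, ← Matrix.trace_add, ← Matrix.add_mul, hD, Matrix.one_mul]

theorem distinguishable_states_not_symmetrizable_general
    {S : Type} [Fintype S] (d d' : ℕ)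
    (N : S → (Matrix (Fin d) (Fin d) ℂ →ₗ[ℂ] Matrix (Fin d') (Fin d') ℂ))
    (htp : ∀ s, ∀ M : Matrix (Fin d) (Fin d) ℂ, ((N s) M).trace = M.trace)
    (ρ₁ ρ₂ : Matrix (Fin d) (Fin d) ℂ)
    (hρ₂ : IsDensityMatrix ρ₂)
    (D₁ D₂ : Matrix (Fin d') (Fin d') ℂ)
    (hD : D₁ + D₂ = 1)
    (ε : ℝ) (hε : ε < 1 / 4)
    (h₁ : ∀ s, 1 - 2 * ε ≤ ((D₁ * N s ρ₁).trace).re)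
    (h₂ : ∀ s, 1 - 2 * ε ≤ ((D₂ * N s ρ₂).trace).re) :
    ¬ ∃ p q : S → ℝ, IsProbDist p ∧ IsProbDist q ∧
        ∑ s : S, p s • N s ρ₁ = ∑ s : S, q s • N s ρ₂ := by
  rintro ⟨p, q, hp, hq, heq⟩
  have hσ₁ := hp.le_re_trace_mul_sum_smul h₁
  rw [heq] at hσ₁
  have hσ₂ := hq.le_re_trace_mul_sum_smul h₂
  have hσ := Matrix.re_trace_mul_add_re_trace_mul_of_add_eq_one hD (∑ s, q s • N s ρ₂)
  rw [hq.trace_sum_smul_map htp hρ₂.2, Complex.one_re] at hσ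
  linarith

/-- Let `{N_s}_{s∈S}` be a finite nonempty family of trace-preserving
linear maps on matrices, `ρ₁, ρ₂` density matrices, `D₁, D₂` positive semidefinite
matrices with `D₁ + D₂ = 𝟙`, and `0 ≤ ε < 1/4`. If `tr(D_i N_s(ρ_i)) ≥ 1 − 2ε` for all
`s ∈ S` and `i ∈ {1,2}`, then no convex combinations of the family applied to `ρ₁` and
`ρ₂` can coincide: there are no `p, q ∈ 𝔓(S)` with
`Σ_s p(s) N_s(ρ₁) = Σ_s q(s) N_s(ρ₂)`. -/
theorem distinguishable_states_not_symmetrizable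
    {S : Type} [Fintype S] [Nonempty S] (d d' : ℕ)
    (N : S → (Matrix (Fin d) (Fin d) ℂ →ₗ[ℂ] Matrix (Fin d') (Fin d') ℂ))
    (htp : ∀ s, ∀ M : Matrix (Fin d) (Fin d) ℂ, ((N s) M).trace = M.trace)
    (ρ₁ ρ₂ : Matrix (Fin d) (Fin d) ℂ)
    (hρ₁ : IsDensityMatrix ρ₁) (hρ₂ : IsDensityMatrix ρ₂)
    (D₁ D₂ : Matrix (Fin d') (Fin d') ℂ)
    (hD₁ : D₁.PosSemidef) (hD₂ : D₂.PosSemidef) (hD : D₁ + D₂ = 1)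
    (ε : ℝ) (hε0 : 0 ≤ ε) (hε : ε < 1 / 4)
    (h₁ : ∀ s, 1 - 2 * ε ≤ ((D₁ * N s ρ₁).trace).re)
    (h₂ : ∀ s, 1 - 2 * ε ≤ ((D₂ * N s ρ₂).trace).re) :
    ¬ ∃ p q : S → ℝ, IsProbDist p ∧ IsProbDist q ∧
        ∑ s : S, p s • N s ρ₁ = ∑ s : S, q s • N s ρ₂ :=
  distinguishable_states_not_symmetrizable_general d d' N htp ρ₁ ρ₂ hρ₂ D₁ D₂ hD ε hε h₁ h₂
end
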